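/- Let D be an n×n symmetric hollow matrix and Q the Householder reflector from v = (1,...,1,1+√n)^T with QDQ = [[D̂, f],[f^T, ξ]]. Then D is a Euclidean distance matrix realizable in dimension at most r if and only if D̂ is negative semi-definite with rank at most r. -/

import Mathlib

/-!
Write `C` for the first `n` columns of the Householder reflector `Q`. Since `Q` is a symmetric
involution sending `𝟙` to a multiple of the last basis vector, the columns of `C` form an
orthonormal basis of `𝟙ᗮ`, and `D̂ = Cᵀ D C`. If `D a b = ‖x a - x b‖²` then, for `u, w ⊥ 𝟙`,
`uᵀ D w = -2 ⟪∑ u a • x a, ∑ w b • x b⟫`, so `-D̂ / 2` is the Gram matrix of the points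
`∑ a, C a k • x a`. Conversely, if `-D̂ / 2` is the Gram matrix of `y`, the points `x = C y` realise
`D`, because `C Cᵀ` fixes `e a - e b` and `D` is symmetric and hollow. Finally, a real matrix is
the Gram matrix of vectors of `ℝ^r` iff it is positive semidefinite of rank at most `r`.
-/

open Matrix Module
open scoped ComplexOrder RealInnerProductSpace

section Gram

variable {𝕜 : Type*} [RCLike 𝕜] {κ : Type*} [Fintype κ]

theorem Matrix.rank_gram_le {E : Type*} [NormedAddCommGroup E] [InnerProductSpace 𝕜 E]
    [FiniteDimensional 𝕜 E] (y : κ → E) : (gram 𝕜 y).rank ≤ finrank 𝕜 E := by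
  rw [gram_eq_conjTranspose_mul (stdOrthonormalBasis 𝕜 E)]
  exact (rank_mul_le_right _ _).trans ((rank_le_card_height _).trans_eq (Fintype.card_fin _))

theorem LinearIsometry.nonempty_of_finrank_le {V : Type*} [NormedAddCommGroup V]
    [InnerProductSpace 𝕜 V] [FiniteDimensional 𝕜 V] {r : ℕ} (h : finrank 𝕜 V ≤ r) :
    Nonempty (V →ₗᵢ[𝕜] EuclideanSpace 𝕜 (Fin r)) := by
  let b := stdOrthonormalBasis 𝕜 V
  let f := b.toBasis.constr 𝕜 fun i => EuclideanSpace.single (Fin.castLE h i) (1 : 𝕜)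
  have hf : Orthonormal 𝕜 (f ∘ b.toBasis) := by
    convert EuclideanSpace.orthonormal_single.comp _ (Fin.castLE_injective h)
    ext1 i
    simp [f]
  exact ⟨f.isometryOfOrthonormal b.orthonormal hf⟩

open scoped MatrixOrder in
theorem Matrix.PosSemidef.exists_gram_eq_of_rank_le [DecidableEq κ] {G : Matrix κ κ 𝕜}
    (hG : G.PosSemidef) {r : ℕ} (hr : G.rank ≤ r) :
    ∃ y : κ → EuclideanSpace 𝕜 (Fin r), gram 𝕜 y = G := by
  obtain ⟨a, rfl⟩ := CStarAlgebra.nonneg_iff_eq_star_mul_self.mp hG.nonneg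
  let b := (EuclideanSpace.basisFun κ 𝕜).toBasis
  let f := toLin b b a
  have hf : finrank 𝕜 (LinearMap.range f) ≤ r := by
    rwa [← rank_eq_finrank_range_toLin, ← rank_conjTranspose_mul_self]
  obtain ⟨L⟩ := LinearIsometry.nonempty_of_finrank_le hf
  refine ⟨fun j => L ⟨f (b j), LinearMap.mem_range_self f _⟩, ?_⟩
  ext i j
  rw [gram_apply, L.inner_map_map]
  simp only [f, toLin_self]
  simp [b, EuclideanSpace.inner_eq_star_dotProduct, mul_apply, dotProduct, mul_comm,
    Pi.single_apply]

theorem Matrix.posSemidef_and_rank_le_iff_exists_gram_eq [DecidableEq κ] {G : Matrix κ κ 𝕜}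
    {r : ℕ} : G.PosSemidef ∧ G.rank ≤ r ↔ ∃ y : κ → EuclideanSpace 𝕜 (Fin r), gram 𝕜 y = G :=
  ⟨fun ⟨hG, hr⟩ => hG.exists_gram_eq_of_rank_le hr, fun ⟨y, hy⟩ =>
    hy ▸ ⟨posSemidef_gram 𝕜 y, (rank_gram_le y).trans_eq finrank_euclideanSpace_fin⟩⟩

end Gram

theorem Matrix.posSemidef_smul_iff {m : Type*} [Fintype m] {M : Matrix m m ℝ} {c : ℝ}
    (hc : 0 < c) : (c • M).PosSemidef ↔ M.PosSemidef :=
  ⟨fun h => by simpa [smul_smul, hc.ne'] using h.smul (inv_nonneg.mpr hc.le),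
    fun h => h.smul hc.le⟩

section SquaredDistances

variable {ι κ E : Type*} [Fintype ι] [NormedAddCommGroup E] [InnerProductSpace ℝ E]

theorem sum_sum_mul_norm_sub_sq (x : ι → E) {u w : ι → ℝ} (hu : ∑ a, u a = 0)
    (hw : ∑ b, w b = 0) :
    ∑ a, ∑ b, u a * w b * ‖x a - x b‖ ^ 2 = -2 * ⟪∑ a, u a • x a, ∑ b, w b • x b⟫ := by
  have h1 : ∑ a, ∑ b, u a * w b * ‖x a‖ ^ 2 = 0 := by
    simp_rw [mul_right_comm _ (w _), ← Finset.mul_sum, ← Finset.sum_mul, hw, mul_zero]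
  have h2 : ∑ a, ∑ b, u a * w b * ‖x b‖ ^ 2 = 0 := by
    simp_rw [mul_assoc, ← Finset.mul_sum, ← Finset.sum_mul, hu, zero_mul]
  have h3 : ∑ a, ∑ b, u a * w b * ⟪x a, x b⟫ = ⟪∑ a, u a • x a, ∑ b, w b • x b⟫ := by
    simp_rw [sum_inner, inner_sum, real_inner_smul_left, real_inner_smul_right, mul_assoc]
  calc ∑ a, ∑ b, u a * w b * ‖x a - x b‖ ^ 2
      = ∑ a, ∑ b, (u a * w b * ‖x a‖ ^ 2 + u a * w b * ‖x b‖ ^ 2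
          - 2 * (u a * w b * ⟪x a, x b⟫)) :=
        Finset.sum_congr rfl fun a _ => Finset.sum_congr rfl fun b _ => by
          rw [norm_sub_sq_real]; ring
    _ = -2 * ⟪∑ a, u a • x a, ∑ b, w b • x b⟫ := by
        simp only [Finset.sum_add_distrib, Finset.sum_sub_distrib, ← Finset.mul_sum, h1, h2, h3]
        ring

theorem gram_sum_smul_eq_of_sqDist (C : Matrix ι κ ℝ) (hC : ∀ k, ∑ a, C a k = 0)
    {D : Matrix ι ι ℝ} {x : ι → E} (hx : ∀ a b, D a b = ‖x a - x b‖ ^ 2) :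
    gram ℝ (fun k => ∑ a, C a k • x a) = (-2⁻¹ : ℝ) • (Cᵀ * D * C) := by
  ext k l
  have h : (Cᵀ * D * C) k l = ∑ a, ∑ b, C a k * C b l * ‖x a - x b‖ ^ 2 := by
    simp only [mul_apply, transpose_apply, hx, Finset.sum_mul]
    rw [Finset.sum_comm]
    simp_rw [mul_right_comm _ _ (C _ l)]
  rw [gram_apply, Matrix.smul_apply, h, sum_sum_mul_norm_sub_sq x (hC k) (hC l), smul_eq_mul]
  ring

theorem sqDist_sum_smul_of_gram [Fintype κ] [DecidableEq ι] (C : Matrix ι κ ℝ)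
    (hC : ∀ z : ι → ℝ, ∑ a, z a = 0 → C *ᵥ (Cᵀ *ᵥ z) = z)
    {D : Matrix ι ι ℝ} (hsymm : D.IsSymm) (hhollow : ∀ a, D a a = 0)
    {y : κ → E} (hy : gram ℝ y = (-2⁻¹ : ℝ) • (Cᵀ * D * C)) (a b : ι) :
    D a b = ‖∑ k, C a k • y k - ∑ k, C b k • y k‖ ^ 2 := by
  set z : ι → ℝ := Pi.single a 1 - Pi.single b 1
  have hz : C *ᵥ (Cᵀ *ᵥ z) = z := hC z (by simp [z])
  have hdiff : ∑ k, C a k • y k - ∑ k, C b k • y k = ∑ k, (Cᵀ *ᵥ z) k • y k := by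
    simp [z, ← Finset.sum_sub_distrib, sub_smul, mulVec_sub]
  rw [hdiff, ← real_inner_self_eq_norm_sq, ← star_dotProduct_gram_mulVec, hy, star_trivial,
    smul_mulVec, dotProduct_smul, ← mulVec_mulVec, ← mulVec_mulVec, hz, dotProduct_mulVec,
    vecMul_transpose, hz]
  simp [z, dotProduct_sub, sub_dotProduct, mulVec_sub, hhollow, hsymm.apply b a]
  ring

theorem exists_sqDist_iff_exists_gram [Fintype κ] [DecidableEq ι] (C : Matrix ι κ ℝ)
    (hC₁ : ∀ k, ∑ a, C a k = 0) (hC₂ : ∀ z : ι → ℝ, ∑ a, z a = 0 → C *ᵥ (Cᵀ *ᵥ z) = z)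
    {D : Matrix ι ι ℝ} (hsymm : D.IsSymm) (hhollow : ∀ a, D a a = 0) :
    (∃ x : ι → E, ∀ a b, D a b = ‖x a - x b‖ ^ 2) ↔
      ∃ y : κ → E, gram ℝ y = (-2⁻¹ : ℝ) • (Cᵀ * D * C) :=
  ⟨fun ⟨_, hx⟩ => ⟨_, gram_sum_smul_eq_of_sqDist C hC₁ hx⟩, fun ⟨_, hy⟩ =>
    ⟨_, sqDist_sum_smul_of_gram C hC₂ hsymm hhollow hy⟩⟩

end SquaredDistances

section Householder

variable {ι : Type*} [Fintype ι] [DecidableEq ι]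

noncomputable def householder (v : ι → ℝ) : Matrix ι ι ℝ := 1 - (2 / (v ⬝ᵥ v)) • vecMulVec v v

theorem householder_transpose (v : ι → ℝ) : (householder v)ᵀ = householder v := by
  simp [householder, transpose_sub, transpose_smul, transpose_vecMulVec]

theorem householder_mul_self (v : ι → ℝ) : householder v * householder v = 1 := by
  by_cases hv : v ⬝ᵥ v = 0
  · simp [householder, hv]
  · have hsq : vecMulVec v v * vecMulVec v v = (v ⬝ᵥ v) • vecMulVec v v := by
      rw [vecMulVec_mul_vecMulVec, vecMulVec_smul]
    have hc : 2 / (v ⬝ᵥ v) * (2 / (v ⬝ᵥ v)) * (v ⬝ᵥ v) = 2 * (2 / (v ⬝ᵥ v)) := by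
      field_simp
    simp only [householder, sub_mul, mul_sub, one_mul, mul_one, smul_mul_smul_comm, hsq, smul_smul,
      hc]
    rw [mul_smul, two_smul]
    abel

theorem householder_sub_mulVec {a b : ι → ℝ} (h : a ⬝ᵥ a = b ⬝ᵥ b) :
    householder (a - b) *ᵥ a = b := by
  have hvv : (a - b) ⬝ᵥ (a - b) = 2 * ((a - b) ⬝ᵥ a) := by
    simp only [sub_dotProduct, dotProduct_sub, h, dotProduct_comm b a]; ring
  by_cases hv : (a - b) ⬝ᵥ a = 0
  · have : a - b = 0 := dotProduct_self_eq_zero.mp (by rw [hvv, hv, mul_zero])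
    rw [sub_eq_zero.mp this]
    simp [householder]
  · rw [householder, sub_mulVec, one_mulVec, smul_mulVec, vecMulVec_mulVec, hvv, op_smul_eq_smul,
      smul_smul, div_mul_cancel_left₀ two_ne_zero, inv_mul_cancel₀ hv, one_smul, sub_sub_cancel]

theorem householder_one_sub_single_mulVec_one (i : ι) :
    householder (1 - Pi.single i (-√(Fintype.card ι))) *ᵥ 1 = Pi.single i (-√(Fintype.card ι)) :=
  householder_sub_mulVec (by simp)

end Householder

section LeadingColumns

variable {n : ℕ} {Q : Matrix (Fin (n + 1)) (Fin (n + 1)) ℝ} {c : ℝ}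

theorem sum_apply_castSucc_eq_zero (hQt : Qᵀ = Q) (hQ1 : Q *ᵥ 1 = Pi.single (Fin.last n) c)
    (i : Fin n) : ∑ a, Q a i.castSucc = 0 := by
  have := congrFun hQ1 i.castSucc
  rw [← hQt] at this
  simpa [mulVec, dotProduct, (Fin.castSucc_lt_last i).ne] using this

theorem submatrix_castSucc_mulVec_transpose_mulVec (hQt : Qᵀ = Q) (hQQ : Q * Q = 1)
    (hQ1 : Q *ᵥ 1 = Pi.single (Fin.last n) c) {z : Fin (n + 1) → ℝ} (hz : ∑ a, z a = 0) :
    Q.submatrix id Fin.castSucc *ᵥ ((Q.submatrix id Fin.castSucc)ᵀ *ᵥ z) = z := by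
  have hlast : ∀ a, Q a (Fin.last n) = c⁻¹ := by
    intro a
    have := congrFun (congrArg (Q *ᵥ ·) hQ1) a
    simp only [mulVec_mulVec, hQQ, one_mulVec, mulVec_single, Pi.one_apply] at this
    exact eq_inv_of_mul_eq_one_left this.symm
  have hQz : (Q *ᵥ z) (Fin.last n) = 0 := by
    rw [← hQt]
    simp [mulVec, dotProduct, hlast, ← Finset.mul_sum, hz]
  rw [transpose_submatrix, hQt]
  calc _ = Q *ᵥ (Q *ᵥ z) := by
        ext a
        conv_rhs => rw [mulVec, dotProduct, Fin.sum_univ_castSucc]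
        rw [hQz, mul_zero, add_zero]
        simp [mulVec, dotProduct]
    _ = z := by rw [mulVec_mulVec, hQQ, one_mulVec]

end LeadingColumns

theorem edm_dim_r_iff_block_negSemidef (n r : ℕ) (D : Matrix (Fin (n + 1)) (Fin (n + 1)) ℝ)
    (hsymm : D.IsSymm) (hhollow : ∀ i, D i i = 0) :
    let v : Fin (n + 1) → ℝ := fun i => if i = Fin.last n then 1 + Real.sqrt (n + 1) else 1
    let Q : Matrix (Fin (n + 1)) (Fin (n + 1)) ℝ := 1 - (2 / (v ⬝ᵥ v)) • vecMulVec v v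
    let Dhat : Matrix (Fin n) (Fin n) ℝ :=
      Matrix.of fun i j => (Q * D * Q) i.castSucc j.castSucc
    ((∃ x : Fin (n + 1) → EuclideanSpace ℝ (Fin r), ∀ i j, D i j = ‖x i - x j‖ ^ 2) ↔
      ((-Dhat).PosSemidef ∧ Dhat.rank ≤ r)) := by
  intro v Q Dhat
  have hv : v = 1 - Pi.single (Fin.last n) (-√(Fintype.card (Fin (n + 1)))) := by
    ext i
    by_cases hi : i = Fin.last n <;> simp [v, hi]
  have hQ : Q = householder v := rfl
  have hQt : Qᵀ = Q := householder_transpose v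
  have hQ1 := householder_one_sub_single_mulVec_one (Fin.last n)
  rw [← hv, ← hQ] at hQ1
  set C := Q.submatrix id Fin.castSucc
  have hDhat : Dhat = Cᵀ * D * C := by
    change (Q * D * Q).submatrix _ _ = _
    rw [transpose_submatrix, hQt, submatrix_mul _ _ _ id _ Function.bijective_id,
      submatrix_mul _ _ _ id _ Function.bijective_id, submatrix_id_id]
  rw [exists_sqDist_iff_exists_gram C (sum_apply_castSucc_eq_zero hQt hQ1)
    (fun _ => submatrix_castSucc_mulVec_transpose_mulVec hQt (householder_mul_self v) hQ1) hsymm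
    hhollow, ← posSemidef_and_rank_le_iff_exists_gram_eq, ← hDhat, rank_smul_of_mem_nonZeroDivisors _
      (mem_nonZeroDivisors_of_ne_zero (by norm_num)), neg_smul, ← smul_neg,
    posSemidef_smul_iff (by norm_num)]
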